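/- Let d ≥ 2 and let U be a random vector in ℝ^d with law N(0, (1/d)Id). For 0 < r₋ < r₊ define the radially truncated co-linear coupling V := V(r₋,r₊) by V := U on the event {|U| ∉ [r₋,r₊]}, and V := c(r₋,r₊)·U/|U| on the event {|U| ∈ [r₋,r₊]}, where c(r₋,r₊) := ( 𝔼(|U|²·1_{|U|∈[r₋,r₊]}) / ℙ(|U|∈[r₋,r₊]) )^{1/2} (so that 𝔼V = 0 and 𝔼|V|² = 1). Let (U_*,V_*) be an independent copy of (U,V), set D(r₋,r₊) := 𝔼( |U−U_*||V−V_*| − (U−U_*)·(V−V_*) ) and R(r₋,r₊) := f(𝔼|U−V|²)/D(r₋,r₊), with the convention R(r₋,r₊) = +∞ when D(r₋,r₊) = 0. Then the coupling/coupling-creation ratio blows up in the iterated limit: for every M > 0 there exists r₀ > 0 such that for every r₋ ≥ r₀ one has liminf_{r₊ → r₋⁺} R(r₋,r₊) ≥ M. -/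

import Mathlib

open MeasureTheory ProbabilityTheory Filter
open scoped RealInnerProductSpace

/-- The centered Gaussian distribution `N(0, (1/d)·Id)` on `ℝ^d`: the product of `d`
one-dimensional centered Gaussians of variance `1/d`, transported to Euclidean space. -/
noncomputable def gaussLaw (d : ℕ) : Measure (EuclideanSpace ℝ (Fin d)) :=
  Measure.map (MeasurableEquiv.toLp 2 (Fin d → ℝ))
    (Measure.pi fun _ : Fin d => gaussianReal 0 ((d : NNReal)⁻¹))

/-- The normalizing constant `c(r₋,r₊) = (𝔼(|U|²·1_{|U|∈[r₋,r₊]}) / ℙ(|U|∈[r₋,r₊]))^{1/2}`. -/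
noncomputable def truncConst {d : ℕ} {Ω : Type*} [MeasurableSpace Ω] (μ : Measure Ω)
    (U : Ω → EuclideanSpace ℝ (Fin d)) (rm rp : ℝ) : ℝ :=
  Real.sqrt ((∫ ω, (if ‖U ω‖ ∈ Set.Icc rm rp then ‖U ω‖ ^ 2 else 0) ∂μ) /
    (μ {ω | ‖U ω‖ ∈ Set.Icc rm rp}).toReal)

/-- The radially truncated co-linear coupling `V(r₋,r₊)` of `U`: `V = U` off the event
`{|U| ∈ [r₋,r₊]}` and `V = c(r₋,r₊)·U/|U|` on it. -/
noncomputable def truncCoupl {d : ℕ} {Ω : Type*} [MeasurableSpace Ω] (μ : Measure Ω)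
    (U : Ω → EuclideanSpace ℝ (Fin d)) (rm rp : ℝ) : Ω → EuclideanSpace ℝ (Fin d) :=
  fun ω => if ‖U ω‖ ∈ Set.Icc rm rp then truncConst μ U rm rp • (‖U ω‖⁻¹ • U ω) else U ω

/-- The coupling creation `D(r₋,r₊) = 𝔼(|U−U_*||V−V_*| − (U−U_*)·(V−V_*))`, where
`V = V(r₋,r₊)` and `(U_*,V_*)` is an independent copy of `(U,V)` (built from `U_*`). -/
noncomputable def couplCreation {d : ℕ} {Ω : Type*} [MeasurableSpace Ω] (μ : Measure Ω)
    (U Us : Ω → EuclideanSpace ℝ (Fin d)) (rm rp : ℝ) : ℝ :=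
  ∫ ω, (‖U ω - Us ω‖ * ‖truncCoupl μ U rm rp ω - truncCoupl μ Us rm rp ω‖
    - ⟪U ω - Us ω, truncCoupl μ U rm rp ω - truncCoupl μ Us rm rp ω⟫) ∂μ

/-- The coupling / coupling-creation ratio `R(r₋,r₊) = f(𝔼|U−V|²)/D(r₋,r₊)`, with the
convention `R = +∞` when `D = 0`; here `f x = x − x²/4`. -/
noncomputable def couplRatio {d : ℕ} {Ω : Type*} [MeasurableSpace Ω] (μ : Measure Ω)
    (U Us : Ω → EuclideanSpace ℝ (Fin d)) (rm rp : ℝ) : EReal :=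
  if couplCreation μ U Us rm rp = 0 then ⊤
  else (((∫ ω, ‖U ω - truncCoupl μ U rm rp ω‖ ^ 2 ∂μ)
    - (∫ ω, ‖U ω - truncCoupl μ U rm rp ω‖ ^ 2 ∂μ) ^ 2 / 4) /
      couplCreation μ U Us rm rp : ℝ)

/-!
The coupling moves only points of the thin shell `rm ≤ |u| ≤ rp`, radially and by at most
`rp - rm`. For two such radial perturbations `v = u + t u`, `v' = u' + t' u'` the creation
`|u - u'||v - v'| - (u - u')·(v - v')` is at most
`8/(rm - 1)² · (|v - u|²|u'|² + |v' - u'|²|u|²)`. If `|u - u'|` dominates the displacement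
`t u - t' u'`, the creation only sees the displacement modulo multiples of `u - u'`, where it equals
`t u' - t' u`, of norm at most `(|t u||u'| + |t' u'||u|)/rm`; otherwise `u` and `u'` are close, so
a point that moves forces the other one to lie at distance at least `rm - 1` from the origin.
Taking expectations and using independence, `D ≤ 16 𝔼|U|²/(rm - 1)² · 𝔼|U - V|²`, while
`f(𝔼|U - V|²) ≥ 𝔼|U - V|²/2`, so `R ≥ (rm - 1)²/(32 𝔼|U|²)`.
-/

section Geometry

variable {E : Type*} [NormedAddCommGroup E] [InnerProductSpace ℝ E]

lemma norm_mul_norm_sub_inner_le_two_mul (a b : E) :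
    ‖a‖ * ‖b‖ - ⟪a, b⟫ ≤ 2 * ‖a‖ * ‖b - a‖ := by
  have hb : ‖b‖ ≤ ‖a‖ + ‖b - a‖ := norm_le_norm_add_norm_sub' b a
  have hab : ⟪a, b⟫ = ‖a‖ ^ 2 + ⟪a, b - a⟫ := by
    rw [inner_sub_right, real_inner_self_eq_norm_sq]; ring
  have := neg_le_of_abs_le (abs_real_inner_le_norm a (b - a))
  nlinarith [norm_nonneg a]

-- The Gram determinant `‖a‖²‖b‖² - ⟪a, b⟫²` does not change when a multiple of `a` is
-- subtracted from `b`.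
lemma norm_mul_norm_sub_inner_le_norm_sub_smul_sq {a b : E}
    (h : ‖a‖ ^ 2 ≤ ‖a‖ * ‖b‖ + ⟪a, b⟫) (s : ℝ) :
    ‖a‖ * ‖b‖ - ⟪a, b⟫ ≤ ‖b - s • a‖ ^ 2 := by
  rcases eq_or_ne a 0 with rfl | ha
  · simp
  have ha' : 0 < ‖a‖ ^ 2 := by positivity
  set w := b - s • a
  have hgram : (‖a‖ * ‖b‖ - ⟪a, b⟫) * (‖a‖ * ‖b‖ + ⟪a, b⟫)
      = ‖a‖ ^ 2 * ‖w‖ ^ 2 - ⟪a, w⟫ ^ 2 := by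
    have hb : b = w + s • a := by simp [w]
    have hb2 : ‖b‖ ^ 2 = ‖w‖ ^ 2 + 2 * s * ⟪a, w⟫ + s ^ 2 * ‖a‖ ^ 2 := by
      rw [hb, norm_add_sq_real, norm_smul, real_inner_smul_right, real_inner_comm,
        Real.norm_eq_abs, mul_pow, sq_abs]; ring
    have hab : ⟪a, b⟫ = ⟪a, w⟫ + s * ‖a‖ ^ 2 := by
      rw [hb, inner_add_right, real_inner_smul_right, real_inner_self_eq_norm_sq]
    linear_combination ‖a‖ ^ 2 * hb2 - (⟪a, b⟫ + ⟪a, w⟫ + s * ‖a‖ ^ 2) * hab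
  have hΦ : 0 ≤ ‖a‖ * ‖b‖ - ⟪a, b⟫ := sub_nonneg.2 (real_inner_le_norm a b)
  have : (‖a‖ * ‖b‖ - ⟪a, b⟫) * ‖a‖ ^ 2 ≤ ‖w‖ ^ 2 * ‖a‖ ^ 2 := by
    nlinarith [sq_nonneg ⟪a, w⟫, mul_le_mul_of_nonneg_left h hΦ]
  exact le_of_mul_le_mul_right this ha'

lemma mul_abs_le_norm_smul {u : E} {t r : ℝ} (ht : t ≠ 0 → r ≤ ‖u‖) :
    r * |t| ≤ ‖t • u‖ := by
  rcases eq_or_ne t 0 with rfl | ht0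
  · simp
  rw [norm_smul, Real.norm_eq_abs, mul_comm]
  exact mul_le_mul_of_nonneg_left (ht ht0) (abs_nonneg t)

lemma sub_one_sq_mul_norm_smul_sq_le {u u' : E} {t r : ℝ} (hr : 1 ≤ r)
    (ht : t ≠ 0 → r ≤ ‖u‖) (huu' : ‖u - u'‖ ≤ 1) :
    (r - 1) ^ 2 * ‖t • u‖ ^ 2 ≤ ‖t • u‖ ^ 2 * ‖u'‖ ^ 2 := by
  rcases eq_or_ne t 0 with rfl | ht0
  · simp
  have : r - 1 ≤ ‖u'‖ := by linarith [ht ht0, norm_le_norm_add_norm_sub' u u']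
  rw [mul_comm]
  gcongr

variable {u u' : E} {t t' r : ℝ}

lemma sub_one_sq_mul_norm_mul_norm_sub_inner_le_of_le (hr : 1 ≤ r)
    (ht : t ≠ 0 → r ≤ ‖u‖) (ht' : t' ≠ 0 → r ≤ ‖u'‖)
    (htu : ‖t • u‖ ≤ 1 / 4) (htu' : ‖t' • u'‖ ≤ 1 / 4)
    (hnear : ‖u - u'‖ ≤ 2 * ‖t • u - t' • u'‖) :
    (r - 1) ^ 2 * (‖u - u'‖ * ‖(u + t • u) - (u' + t' • u')‖
        - ⟪u - u', (u + t • u) - (u' + t' • u')⟫)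
      ≤ 8 * (‖t • u‖ ^ 2 * ‖u'‖ ^ 2 + ‖t' • u'‖ ^ 2 * ‖u‖ ^ 2) := by
  have hba : (u + t • u) - (u' + t' • u') - (u - u') = t • u - t' • u' := by abel
  have hd : ‖t • u - t' • u'‖ ≤ ‖t • u‖ + ‖t' • u'‖ := norm_sub_le _ _
  have hΦ := norm_mul_norm_sub_inner_le_two_mul (u - u') ((u + t • u) - (u' + t' • u'))
  rw [hba] at hΦ
  have h1 := sub_one_sq_mul_norm_smul_sq_le hr ht (u' := u') (by linarith)
  have h2 := sub_one_sq_mul_norm_smul_sq_le hr ht' (u' := u) (by rw [norm_sub_rev]; linarith)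
  have hΦ' : ‖u - u'‖ * ‖(u + t • u) - (u' + t' • u')‖
      - ⟪u - u', (u + t • u) - (u' + t' • u')⟫ ≤ 8 * (‖t • u‖ ^ 2 + ‖t' • u'‖ ^ 2) := by
    nlinarith [norm_nonneg (u - u'), norm_nonneg (t • u - t' • u'),
      sq_nonneg (‖t • u‖ - ‖t' • u'‖)]
  calc _ ≤ (r - 1) ^ 2 * (8 * (‖t • u‖ ^ 2 + ‖t' • u'‖ ^ 2)) := by gcongr
    _ ≤ _ := by linarith

lemma sq_mul_norm_mul_norm_sub_inner_le_of_lt (hr : 0 < r)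
    (ht : r * |t| ≤ ‖t • u‖) (ht' : r * |t'| ≤ ‖t' • u'‖)
    (hfar : 2 * ‖t • u - t' • u'‖ < ‖u - u'‖) :
    r ^ 2 * (‖u - u'‖ * ‖(u + t • u) - (u' + t' • u')‖
        - ⟪u - u', (u + t • u) - (u' + t' • u')⟫)
      ≤ 2 * (‖t • u‖ ^ 2 * ‖u'‖ ^ 2 + ‖t' • u'‖ ^ 2 * ‖u‖ ^ 2) := by
  set a := u - u'
  set b := (u + t • u) - (u' + t' • u')
  have hab : ⟪a, b⟫ = ‖a‖ ^ 2 + ⟪a, t • u - t' • u'⟫ := by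
    rw [← real_inner_self_eq_norm_sq, ← inner_add_right]; congr 1; simp only [a, b]; abel
  have hreg : ‖a‖ ^ 2 ≤ ‖a‖ * ‖b‖ + ⟪a, b⟫ := by
    have := neg_le_of_abs_le (abs_real_inner_le_norm a (t • u - t' • u'))
    nlinarith [real_inner_le_norm a b, norm_nonneg a]
  have hw : b - (1 + t + t') • a = t • u' - t' • u := by
    simp only [a, b, add_smul, one_smul, smul_sub]; abel
  have hΦ := norm_mul_norm_sub_inner_le_norm_sub_smul_sq hreg (1 + t + t')
  rw [hw] at hΦ
  have hwn : r * ‖t • u' - t' • u‖ ≤ ‖t • u‖ * ‖u'‖ + ‖t' • u'‖ * ‖u‖ := by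
    calc r * ‖t • u' - t' • u‖ ≤ r * |t| * ‖u'‖ + r * |t'| * ‖u‖ := by
          have := norm_sub_le (t • u') (t' • u)
          rw [norm_smul, norm_smul, Real.norm_eq_abs, Real.norm_eq_abs] at this
          nlinarith
      _ ≤ _ := by gcongr
  calc _ ≤ r ^ 2 * ‖t • u' - t' • u‖ ^ 2 := by gcongr
    _ ≤ (‖t • u‖ * ‖u'‖ + ‖t' • u'‖ * ‖u‖) ^ 2 := by
        rw [← mul_pow]; gcongr
    _ ≤ _ := by nlinarith [sq_nonneg (‖t • u‖ * ‖u'‖ - ‖t' • u'‖ * ‖u‖)]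

theorem norm_mul_norm_sub_inner_add_smul_le (hr : 1 < r)
    (ht : t ≠ 0 → r ≤ ‖u‖) (ht' : t' ≠ 0 → r ≤ ‖u'‖)
    (htu : ‖t • u‖ ≤ 1 / 4) (htu' : ‖t' • u'‖ ≤ 1 / 4) :
    ‖u - u'‖ * ‖(u + t • u) - (u' + t' • u')‖ - ⟪u - u', (u + t • u) - (u' + t' • u')⟫
      ≤ 8 / (r - 1) ^ 2 * (‖t • u‖ ^ 2 * ‖u'‖ ^ 2 + ‖t' • u'‖ ^ 2 * ‖u‖ ^ 2) := by
  rw [div_mul_eq_mul_div, le_div_iff₀ (by nlinarith), mul_comm]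
  rcases le_or_gt ‖u - u'‖ (2 * ‖t • u - t' • u'‖) with hnear | hfar
  · exact sub_one_sq_mul_norm_mul_norm_sub_inner_le_of_le hr.le ht ht' htu htu' hnear
  · have hΦ := sq_mul_norm_mul_norm_sub_inner_le_of_lt (by linarith)
      (mul_abs_le_norm_smul ht) (mul_abs_le_norm_smul ht') hfar
    have hΦ0 := sub_nonneg.2 (real_inner_le_norm (u - u') ((u + t • u) - (u' + t' • u')))
    have hS : 0 ≤ ‖t • u‖ ^ 2 * ‖u'‖ ^ 2 + ‖t' • u'‖ ^ 2 * ‖u‖ ^ 2 := by positivity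
    nlinarith [mul_le_mul_of_nonneg_right (by nlinarith : (r - 1) ^ 2 ≤ r ^ 2) hΦ0]

end Geometry

section Truncation

variable {E : Type*} [NormedAddCommGroup E]

noncomputable def radialFactor (c rm rp : ℝ) (u : E) : ℝ :=
  if ‖u‖ ∈ Set.Icc rm rp then c * ‖u‖⁻¹ - 1 else 0

variable {c rm rp : ℝ}

lemma le_norm_of_radialFactor_ne_zero {u : E} (h : radialFactor c rm rp u ≠ 0) :
    rm ≤ ‖u‖ := by
  unfold radialFactor at h
  split_ifs at h with hu
  · exact hu.1
  · exact absurd rfl h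

lemma norm_radialFactor_smul_le [NormedSpace ℝ E] (hrm : 0 < rm) (hc : c ∈ Set.Icc rm rp)
    (u : E) :
    ‖radialFactor c rm rp u • u‖ ≤ rp - rm := by
  unfold radialFactor
  split_ifs with hu
  · have hu0 : ‖u‖ ≠ 0 := (hrm.trans_le hu.1).ne'
    rw [norm_smul, Real.norm_eq_abs, ← abs_of_nonneg (norm_nonneg u), ← abs_mul,
      abs_of_nonneg (norm_nonneg u), sub_mul, mul_assoc, inv_mul_cancel₀ hu0]
    rw [abs_le]; constructor <;> linarith [hu.1, hu.2, hc.1, hc.2]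
  · simp only [zero_smul, norm_zero, sub_nonneg]; exact hc.1.trans hc.2

lemma measurable_radialFactor [MeasurableSpace E] [OpensMeasurableSpace E] :
    Measurable (radialFactor c rm rp : E → ℝ) :=
  Measurable.ite (measurableSet_Icc.preimage measurable_norm) (by fun_prop) measurable_const

end Truncation

section Coupling

variable {d : ℕ} {Ω : Type*} [MeasurableSpace Ω] {μ : Measure Ω}
  {U Us : Ω → EuclideanSpace ℝ (Fin d)} {rm rp : ℝ}

lemma truncCoupl_eq_add_smul (ω : Ω) :
    truncCoupl μ U rm rp ω
      = U ω + radialFactor (truncConst μ U rm rp) rm rp (U ω) • U ω := by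
  unfold truncCoupl radialFactor
  split_ifs
  · rw [smul_smul, sub_smul, one_smul, add_sub_cancel]
  · rw [zero_smul, add_zero]

lemma truncConst_mem_Icc [IsFiniteMeasure μ] (hU : Measurable U) (hrm : 0 ≤ rm)
    (hp : μ {ω | ‖U ω‖ ∈ Set.Icc rm rp} ≠ 0) : truncConst μ U rm rp ∈ Set.Icc rm rp := by
  set S := {ω | ‖U ω‖ ∈ Set.Icc rm rp}
  have hS : MeasurableSet S := measurableSet_Icc.preimage hU.norm
  have hp0 : 0 < μ.real S := ENNReal.toReal_pos hp (measure_ne_top μ S)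
  have hN : ∫ ω, (if ‖U ω‖ ∈ Set.Icc rm rp then ‖U ω‖ ^ 2 else 0) ∂μ
      = ∫ ω in S, ‖U ω‖ ^ 2 ∂μ := by
    rw [← integral_indicator hS]; simp only [Set.indicator_apply, S, Set.mem_ofPred_eq]
  have hint : IntegrableOn (fun ω => ‖U ω‖ ^ 2) S μ := by
    refine Measure.integrableOn_of_bounded (M := rp ^ 2) (measure_ne_top μ S)
      (hU.norm.pow_const 2).aestronglyMeasurable ?_
    filter_upwards [ae_restrict_mem hS] with ω hω
    rw [Real.norm_eq_abs, abs_of_nonneg (by positivity)]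
    exact pow_le_pow_left₀ (norm_nonneg _) hω.2 2
  have hlo : rm ^ 2 * μ.real S ≤ ∫ ω in S, ‖U ω‖ ^ 2 ∂μ :=
    setIntegral_ge_of_const_le_real hS (measure_ne_top μ S)
      (fun ω hω => pow_le_pow_left₀ hrm hω.1 2) hint
  have hhi : ∫ ω in S, ‖U ω‖ ^ 2 ∂μ ≤ rp ^ 2 * μ.real S := by
    rw [mul_comm, ← smul_eq_mul, ← setIntegral_const]
    exact setIntegral_mono_on hint (integrableOn_const (measure_ne_top μ S)) hS
      (fun ω hω => pow_le_pow_left₀ (norm_nonneg _) hω.2 2)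
  obtain ⟨ω₀, hω₀⟩ := nonempty_of_measure_ne_zero hp
  have hrp : 0 ≤ rp := hrm.trans (hω₀.1.trans hω₀.2)
  unfold truncConst
  rw [hN]
  exact ⟨(Real.le_sqrt hrm (by positivity)).2 ((le_div_iff₀ hp0).2 hlo),
    (Real.sqrt_le_left hrp).2 ((div_le_iff₀ hp0).2 hhi)⟩

-- If the shell is null, `truncConst` is the junk value `√(0 / 0) = 0`, but then `U` a.s. avoids
-- the shell.
lemma ae_norm_radialFactor_smul_le [IsFiniteMeasure μ] (hU : Measurable U) (hrm : 0 < rm)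
    (hrp : rm ≤ rp) :
    ∀ᵐ ω ∂μ, ‖radialFactor (truncConst μ U rm rp) rm rp (U ω) • U ω‖ ≤ rp - rm := by
  by_cases hp : μ {ω | ‖U ω‖ ∈ Set.Icc rm rp} = 0
  · filter_upwards [measure_eq_zero_iff_ae_notMem.1 hp] with ω hω
    simp only [radialFactor, if_neg hω, zero_smul, norm_zero, sub_nonneg, hrp]
  · exact ae_of_all _ fun ω => norm_radialFactor_smul_le hrm (truncConst_mem_Icc hU hrm.le hp) _

lemma truncConst_eq_of_identDistrib (h : IdentDistrib U Us μ μ) :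
    truncConst μ Us rm rp = truncConst μ U rm rp := by
  have hS : MeasurableSet {u : EuclideanSpace ℝ (Fin d) | ‖u‖ ∈ Set.Icc rm rp} :=
    measurableSet_Icc.preimage measurable_norm
  have hN := (h.comp (u := fun u => if ‖u‖ ∈ Set.Icc rm rp then ‖u‖ ^ 2 else 0)
    (Measurable.ite hS (measurable_norm.pow_const 2) measurable_const)).integral_eq
  have hp : μ {ω | ‖Us ω‖ ∈ Set.Icc rm rp} = μ {ω | ‖U ω‖ ∈ Set.Icc rm rp} :=
    (h.measure_mem_eq hS).symm
  unfold truncConst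
  rw [hp]
  exact congrArg (fun N => Real.sqrt (N / _)) hN.symm

lemma couplCreation_nonneg : 0 ≤ couplCreation μ U Us rm rp :=
  integral_nonneg fun _ => sub_nonneg.2 (real_inner_le_norm _ _)

lemma integral_comp_mul_comp_of_identDistrib {α : Type*} [MeasurableSpace α] {X Y : Ω → α}
    (hX : Measurable X) (hY : Measurable Y) (hident : IdentDistrib X Y μ μ)
    (hindep : IndepFun X Y μ) {f h : α → ℝ} (hf : Measurable f) (hh : Measurable h) :
    ∫ ω, f (X ω) * h (Y ω) ∂μ = (∫ ω, f (X ω) ∂μ) * ∫ ω, h (X ω) ∂μ := by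
  rw [hindep.integral_fun_comp_mul_comp hX.aemeasurable hY.aemeasurable
    hf.aestronglyMeasurable hh.aestronglyMeasurable]
  exact congrArg _ (hident.comp hh).integral_eq.symm

lemma ae_couplCreation_integrand_le [IsFiniteMeasure μ] (hU : Measurable U)
    (hUs : Measurable Us) (hrm : 1 < rm) (hrp : rm ≤ rp)
    (hrp' : rp ≤ rm + 1 / 4) :
    ∀ᵐ ω ∂μ, ‖U ω - Us ω‖ * ‖truncCoupl μ U rm rp ω - truncCoupl μ Us rm rp ω‖
        - ⟪U ω - Us ω, truncCoupl μ U rm rp ω - truncCoupl μ Us rm rp ω⟫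
      ≤ 8 / (rm - 1) ^ 2 * (‖U ω - truncCoupl μ U rm rp ω‖ ^ 2 * ‖Us ω‖ ^ 2
        + ‖Us ω - truncCoupl μ Us rm rp ω‖ ^ 2 * ‖U ω‖ ^ 2) := by
  filter_upwards [ae_norm_radialFactor_smul_le hU (by linarith) hrp,
    ae_norm_radialFactor_smul_le (μ := μ) hUs (by linarith) hrp] with ω hω hωs
  simp only [truncCoupl_eq_add_smul, sub_add_cancel_left, norm_neg]
  exact norm_mul_norm_sub_inner_add_smul_le hrm le_norm_of_radialFactor_ne_zero
    le_norm_of_radialFactor_ne_zero (by linarith) (by linarith)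

theorem couplCreation_le [IsProbabilityMeasure μ] (hU : Measurable U) (hUs : Measurable Us)
    (hident : IdentDistrib U Us μ μ) (hindep : IndepFun U Us μ)
    (hU2 : Integrable (fun ω => ‖U ω‖ ^ 2) μ) (hrm : 1 < rm) (hrp : rm ≤ rp)
    (hrp' : rp ≤ rm + 1 / 4) :
    couplCreation μ U Us rm rp ≤ 16 * (∫ ω, ‖U ω‖ ^ 2 ∂μ) / (rm - 1) ^ 2 *
      ∫ ω, ‖U ω - truncCoupl μ U rm rp ω‖ ^ 2 ∂μ := by
  set g : EuclideanSpace ℝ (Fin d) → ℝ :=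
    fun u => ‖radialFactor (truncConst μ U rm rp) rm rp u • u‖ ^ 2
  have hg : Measurable g := (measurable_radialFactor.smul measurable_id).norm.pow_const 2
  have hn : Measurable fun u : EuclideanSpace ℝ (Fin d) => ‖u‖ ^ 2 := measurable_norm.pow_const 2
  have hgU (ω : Ω) : ‖U ω - truncCoupl μ U rm rp ω‖ ^ 2 = g (U ω) := by
    rw [truncCoupl_eq_add_smul, sub_add_cancel_left, norm_neg]
  have hgUs (ω : Ω) : ‖Us ω - truncCoupl μ Us rm rp ω‖ ^ 2 = g (Us ω) := by
    rw [truncCoupl_eq_add_smul, sub_add_cancel_left, norm_neg, truncConst_eq_of_identDistrib hident]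
  have hg_int : Integrable (fun ω => g (U ω)) μ := by
    refine Integrable.of_bound (hg.comp hU).aestronglyMeasurable (1 / 4 ^ 2) ?_
    filter_upwards [ae_norm_radialFactor_smul_le hU (by linarith) hrp] with ω hω
    rw [Real.norm_eq_abs, abs_of_nonneg (by positivity), one_div, ← inv_pow]
    exact pow_le_pow_left₀ (norm_nonneg _) (by linarith) 2
  have hJ1 : Integrable (fun ω => g (U ω) * ‖Us ω‖ ^ 2) μ :=
    (hindep.comp hg hn).integrable_mul hg_int ((hident.comp hn).integrable_snd hU2)
  have hJ2 : Integrable (fun ω => ‖U ω‖ ^ 2 * g (Us ω)) μ :=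
    (hindep.comp hn hg).integrable_mul hU2 ((hident.comp hg).integrable_snd hg_int)
  calc couplCreation μ U Us rm rp
      ≤ ∫ ω, 8 / (rm - 1) ^ 2 * (g (U ω) * ‖Us ω‖ ^ 2 + ‖U ω‖ ^ 2 * g (Us ω)) ∂μ := by
        refine integral_mono_of_nonneg (ae_of_all _ fun ω => ?_) ((hJ1.add hJ2).const_mul _) ?_
        · exact sub_nonneg.2 (real_inner_le_norm _ _)
        filter_upwards [ae_couplCreation_integrand_le hU hUs hrm hrp hrp'] with ω hω
        rwa [hgU, hgUs, mul_comm (g (Us ω))] at hω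
    _ = _ := by
        rw [integral_const_mul, integral_add hJ1 hJ2,
          integral_comp_mul_comp_of_identDistrib hU hUs hident hindep hg hn,
          integral_comp_mul_comp_of_identDistrib hU hUs hident hindep hn hg]
        simp only [hgU]
        ring

lemma integral_norm_sub_truncCoupl_sq_le [IsProbabilityMeasure μ] (hU : Measurable U)
    (hrm : 0 < rm) (hrp : rm ≤ rp) :
    ∫ ω, ‖U ω - truncCoupl μ U rm rp ω‖ ^ 2 ∂μ ≤ (rp - rm) ^ 2 := by
  calc _ ≤ ∫ _, (rp - rm) ^ 2 ∂μ := by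
        refine integral_mono_of_nonneg (ae_of_all _ fun _ => by positivity) (integrable_const _) ?_
        filter_upwards [ae_norm_radialFactor_smul_le hU hrm hrp] with ω hω
        rw [truncCoupl_eq_add_smul, sub_add_cancel_left, norm_neg]
        exact pow_le_pow_left₀ (norm_nonneg _) hω 2
    _ = _ := by simp

lemma coe_le_couplRatio {M K : ℝ} (hM : 0 ≤ M) (hMK : 2 * M * K ≤ 1)
    (hD : couplCreation μ U Us rm rp ≤ K * ∫ ω, ‖U ω - truncCoupl μ U rm rp ω‖ ^ 2 ∂μ)
    (hx : ∫ ω, ‖U ω - truncCoupl μ U rm rp ω‖ ^ 2 ∂μ ≤ 2) :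
    (M : EReal) ≤ couplRatio μ U Us rm rp := by
  unfold couplRatio
  split_ifs with hD0
  · exact le_top
  set x := ∫ ω, ‖U ω - truncCoupl μ U rm rp ω‖ ^ 2 ∂μ
  have hx0 : 0 ≤ x := integral_nonneg fun _ => by positivity
  have hDpos : 0 < couplCreation μ U Us rm rp := couplCreation_nonneg.lt_of_ne' hD0
  rw [EReal.coe_le_coe_iff, le_div_iff₀ hDpos]
  calc M * couplCreation μ U Us rm rp ≤ M * (K * x) := by gcongr
    _ ≤ x / 2 := by nlinarith [mul_le_mul_of_nonneg_right hMK hx0]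
    _ ≤ x - x ^ 2 / 4 := by nlinarith

theorem le_liminf_couplRatio [IsProbabilityMeasure μ] (hU : Measurable U) (hUs : Measurable Us)
    (hident : IdentDistrib U Us μ μ) (hindep : IndepFun U Us μ)
    (hU2 : Integrable (fun ω => ‖U ω‖ ^ 2) μ) {M : ℝ} (hM : 0 ≤ M) :
    ∃ r₀ : ℝ, 0 < r₀ ∧ ∀ rm : ℝ, r₀ ≤ rm →
      (M : EReal) ≤ liminf (fun rp => couplRatio μ U Us rm rp)
        (nhdsWithin rm (Set.Ioi rm)) := by
  set m2 := ∫ ω, ‖U ω‖ ^ 2 ∂μ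
  have hm2 : 0 ≤ m2 := integral_nonneg fun _ => by positivity
  refine ⟨2 + 32 * M * m2, by positivity, fun rm hrm => ?_⟩
  have hrm1 : 1 + 32 * M * m2 ≤ rm - 1 := by linarith
  have hMm2 : 0 ≤ M * m2 := mul_nonneg hM hm2
  have hK : 2 * M * (16 * m2 / (rm - 1) ^ 2) ≤ 1 := by
    rw [← mul_div_assoc, div_le_one (by nlinarith)]
    nlinarith
  refine le_liminf_of_le (by isBoundedDefault) ?_
  filter_upwards [Ioo_mem_nhdsGT (by linarith : rm < rm + 1 / 4)] with rp ⟨hrp, hrp'⟩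
  refine coe_le_couplRatio hM hK
    (couplCreation_le hU hUs hident hindep hU2 (by linarith) hrp.le hrp'.le) ?_
  calc _ ≤ (rp - rm) ^ 2 := integral_norm_sub_truncCoupl_sq_le hU (by linarith) hrp.le
    _ ≤ 2 := by nlinarith

end Coupling

lemma integrable_norm_sq_gaussLaw (d : ℕ) :
    Integrable (fun u : EuclideanSpace ℝ (Fin d) => ‖u‖ ^ 2) (gaussLaw d) := by
  rw [gaussLaw, (MeasurableEquiv.measurableEmbedding _).integrable_map_iff]
  simp only [Function.comp_def, EuclideanSpace.norm_sq_eq, MeasurableEquiv.toLp_apply,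
    PiLp.toLp_apply, Real.norm_eq_abs, sq_abs]
  exact integrable_finsetSum _ fun i _ =>
    integrable_comp_eval (f := fun x => x ^ 2) (memLp_id_gaussianReal 2).integrable_sq

theorem stmt16_general {d : ℕ} {Ω : Type*} [MeasurableSpace Ω] (μ : Measure Ω)
    [IsProbabilityMeasure μ]
    (U Us : Ω → EuclideanSpace ℝ (Fin d))
    (hUm : Measurable U) (hUsm : Measurable Us)
    (hUlaw : Measure.map U μ = gaussLaw d) (hUslaw : Measure.map Us μ = gaussLaw d)
    (hindep : IndepFun U Us μ) :
    ∀ M : ℝ, 0 < M → ∃ r₀ : ℝ, 0 < r₀ ∧ ∀ rm : ℝ, r₀ ≤ rm →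
      (M : EReal) ≤ liminf (fun rp => couplRatio μ U Us rm rp)
        (nhdsWithin rm (Set.Ioi rm)) := by
  intro M hM
  have hU2 : Integrable (fun ω => ‖U ω‖ ^ 2) μ := by
    have h := integrable_norm_sq_gaussLaw d
    rw [← hUlaw] at h
    exact h.comp_measurable hUm
  exact le_liminf_couplRatio hUm hUsm
    ⟨hUm.aemeasurable, hUsm.aemeasurable, hUlaw.trans hUslaw.symm⟩ hindep hU2 hM.le

/-- **necessity of sub-exponential rates.** For `U` Gaussian
`N(0,(1/d)Id)` in `ℝ^d`, `d ≥ 2`, and the radially truncated co-linear coupling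
`V(r₋,r₊)`, the coupling / coupling-creation ratio `R(r₋,r₊)` blows up in the iterated
limit: for every `M > 0` there is `r₀ > 0` such that for all `r₋ ≥ r₀`,
`liminf_{r₊→r₋⁺} R(r₋,r₊) ≥ M`. -/
theorem stmt16 {d : ℕ} (hd : 2 ≤ d) {Ω : Type*} [MeasurableSpace Ω] (μ : Measure Ω)
    [IsProbabilityMeasure μ]
    (U Us : Ω → EuclideanSpace ℝ (Fin d))
    (hUm : Measurable U) (hUsm : Measurable Us)
    (hUlaw : Measure.map U μ = gaussLaw d) (hUslaw : Measure.map Us μ = gaussLaw d)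
    (hindep : IndepFun U Us μ) :
    ∀ M : ℝ, 0 < M → ∃ r₀ : ℝ, 0 < r₀ ∧ ∀ rm : ℝ, r₀ ≤ rm →
      (M : EReal) ≤ liminf (fun rp => couplRatio μ U Us rm rp)
        (nhdsWithin rm (Set.Ioi rm)) :=
  stmt16_general μ U Us hUm hUsm hUlaw hUslaw hindep
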